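/- arXiv:alg-geom/9501003 — 3 statements merged into one kernel-verified Lean document; each statement's English description precedes it below -/
import Mathlib

section
/- Let G be a group and a, b ∈ G. Then for all natural numbers m, (a·b)^m ≡ a^m · b^m · [b,a]^{m(m-1)/2} modulo G^(3), where G^(3) is the third term of the lower central series. -/
/-- The commutator `[a,b] = a⁻¹ b⁻¹ a b`. -/
def commP {G : Type*} [Group G] (a b : G) : G := a⁻¹ * b⁻¹ * a * b

/-!
Modulo `G₃ = [[G, G], G]` the commutator `c = [b, a]` is central and `b a = a b c`.
Moving each of the `m` copies of `a` in `(a b)^m` to the left past the `b`'s collected so far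
therefore produces `0 + 1 + ⋯ + (m - 1) = m (m - 1) / 2` central factors `c`.
-/

open scoped commutatorElement

section CentralCommutator

variable {Q : Type*} [Group Q] {A B c : Q}

theorem pow_mul_eq_mul_pow_mul_pow (hB : Commute B c) (h : B * A = A * B * c) (n : ℕ) :
    B ^ n * A = A * B ^ n * c ^ n := by
  have hconj : SemiconjBy A (B * c) B := by rw [SemiconjBy, h, mul_assoc]
  rw [mul_assoc, ← hB.mul_pow]
  exact (hconj.pow_right n).eq.symm

theorem mul_pow_eq_mul_pow_mul_pow_choose (hA : Commute A c) (hB : Commute B c)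
    (h : B * A = A * B * c) (n : ℕ) :
    (A * B) ^ n = A ^ n * B ^ n * c ^ n.choose 2 := by
  induction n with
  | zero => simp
  | succ n ih =>
    have hAB : Commute (A * B) (c ^ n.choose 2) := (hA.mul_left hB).pow_right _
    calc (A * B) ^ (n + 1) = A ^ n * (B ^ n * A) * B * c ^ n.choose 2 := by
          rw [pow_succ, ih, mul_assoc (A ^ n * B ^ n), ← hAB.eq]; group
      _ = A ^ n * A * B ^ n * (c ^ n * B) * c ^ n.choose 2 := by
          rw [pow_mul_eq_mul_pow_mul_pow hB h]; group
      _ = A ^ (n + 1) * B ^ (n + 1) * c ^ (n + 1).choose 2 := by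
          rw [← (hB.pow_right n).eq, Nat.choose_succ_succ', Nat.choose_one_right]; group

end CentralCommutator

theorem commute_mk_of_commutatorElement_mem {G : Type*} [Group G] {N : Subgroup G} [N.Normal]
    {x y : G} (h : ⁅x, y⁆ ∈ N) : Commute (x : G ⧸ N) (y : G ⧸ N) :=
  commutatorElement_eq_one_iff_commute.1 <| (QuotientGroup.eq_one_iff _).2 h

theorem mul_commP {G : Type*} [Group G] (a b : G) : a * b * commP b a = b * a := by
  simp only [commP]; group

theorem commP_mem_commutator {G : Type*} [Group G] (a b : G) : commP a b ∈ commutator G := by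
  have : commP a b = ⁅a⁻¹, b⁻¹⁆ := by simp [commP, commutatorElement_def]
  exact this ▸ Subgroup.commutator_mem_commutator (Subgroup.mem_top _) (Subgroup.mem_top _)

theorem mul_pow_mod_lcs3 {G : Type*} [Group G] (a b : G) (m : ℕ) :
    (a * b) ^ m * (a ^ m * b ^ m * (commP b a) ^ (m * (m - 1) / 2))⁻¹
      ∈ (⊤ : Subgroup G).lowerCentralSeries 2 := by
  set N := (⊤ : Subgroup G).lowerCentralSeries 2
  have central (z : G) : Commute (↑(commP b a) : G ⧸ N) (z : G ⧸ N) :=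
    commute_mk_of_commutatorElement_mem <|
      Subgroup.commutator_mem_commutator (commP_mem_commutator b a) (Subgroup.mem_top z)
  have swap : (b : G ⧸ N) * a = a * b * commP b a := by
    simp only [← QuotientGroup.mk_mul, mul_commP]
  have expand := mul_pow_eq_mul_pow_mul_pow_choose (central a).symm (central b).symm swap m
  rw [← QuotientGroup.eq_one_iff]
  simp only [QuotientGroup.mk_mul, QuotientGroup.mk_inv, QuotientGroup.mk_pow, expand,
    Nat.choose_two_right, mul_inv_cancel]
end

section
/- Let G be a group, a, b ∈ G, and m a natural number. Then a^{-m} b a^m b^{-1} ≡ [a, b^{-1}]^m · [[a,b^{-1}], a]^{m(m-1)/2} modulo G^(4). -/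
/-!
Modulo `G^(4)` the element `d = [[a,b⁻¹],a]` is central, so conjugation by `a` acts on
`c = [a,b⁻¹]` as `a⁻¹ c a = c d`, and hence on `c ^ k` as multiplication by `d ^ k`.
Since `a^{-(m+1)} b a^{m+1} b⁻¹ = a⁻¹ (a^{-m} b a^m b⁻¹) a · c`, induction on `m` produces
`c ^ m d ^ (0 + 1 + ⋯ + (m-1)) = c ^ m d ^ (m choose 2)`.
-/

open scoped commutatorElement

section Group

variable {G : Type*} [Group G]

theorem commP_eq_commutatorElement (a b : G) : commP a b = ⁅a⁻¹, b⁻¹⁆ := by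
  simp [commP, commutatorElement_def]

theorem map_commP {H : Type*} [Group H] (f : G →* H) (a b : G) :
    f (commP a b) = commP (f a) (f b) := by
  simp [commP]

theorem inv_mul_mul_eq_mul_commP (a c : G) : a⁻¹ * c * a = c * commP c a := by
  simp [commP, mul_assoc]

theorem inv_pow_mul_mul_pow_mul_inv_eq {a b : G} (hda : Commute (commP (commP a b⁻¹) a) a)
    (hdc : Commute (commP (commP a b⁻¹) a) (commP a b⁻¹)) (m : ℕ) :
    (a ^ m)⁻¹ * b * a ^ m * b⁻¹ = commP a b⁻¹ ^ m * commP (commP a b⁻¹) a ^ m.choose 2 := by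
  set c := commP a b⁻¹ with hc
  set d := commP c a
  induction m with
  | zero => simp
  | succ m ih =>
    have hstep : (a ^ (m + 1))⁻¹ * b * a ^ (m + 1) * b⁻¹
        = a⁻¹ * ((a ^ m)⁻¹ * b * a ^ m * b⁻¹) * a * c := by
      rw [hc, commP]; group
    have hconj_c : a⁻¹ * c ^ m * a = (c * d) ^ m := by
      rw [← inv_mul_mul_eq_mul_commP]
      simpa only [inv_inv] using (conj_pow (a := a⁻¹) (b := c) (i := m)).symm
    have hconj_d : a⁻¹ * d ^ m.choose 2 * a = d ^ m.choose 2 := by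
      rw [mul_assoc, (hda.pow_left _).eq, inv_mul_cancel_left]
    calc (a ^ (m + 1))⁻¹ * b * a ^ (m + 1) * b⁻¹
        = (a⁻¹ * c ^ m * a) * (a⁻¹ * d ^ m.choose 2 * a) * c := by rw [hstep, ih]; group
      _ = c ^ m * (d ^ (m + m.choose 2) * c) := by
        rw [hconj_c, hconj_d, hdc.symm.mul_pow, pow_add]; group
      _ = c ^ (m + 1) * d ^ (m + 1).choose 2 := by
        rw [(hdc.pow_left _).eq, Nat.choose_succ_succ', Nat.choose_one_right, pow_succ,
          mul_assoc]

theorem commP_mem_lowerCentralSeries_succ {n : ℕ} {a : G}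
    (ha : a ∈ (⊤ : Subgroup G).lowerCentralSeries n) (b : G) :
    commP a b ∈ (⊤ : Subgroup G).lowerCentralSeries (n + 1) := by
  rw [commP_eq_commutatorElement]
  exact Subgroup.commutator_mem_commutator (inv_mem ha) (Subgroup.mem_top _)

theorem commute_mk_of_mem_lowerCentralSeries {n : ℕ} {x : G}
    (hx : x ∈ (⊤ : Subgroup G).lowerCentralSeries n) (y : G) :
    Commute (x : G ⧸ (⊤ : Subgroup G).lowerCentralSeries (n + 1)) y := by
  have h : QuotientGroup.mk' _ ⁅x, y⁆ = 1 := (QuotientGroup.eq_one_iff _).mpr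
    (Subgroup.commutator_mem_commutator hx (Subgroup.mem_top y))
  rwa [map_commutatorElement, commutatorElement_eq_one_iff_commute] at h

end Group

theorem conj_pow_mod_lcs4 {G : Type*} [Group G] (a b : G) (m : ℕ) :
    (a ^ m)⁻¹ * b * a ^ m * b⁻¹ *
      ((commP a b⁻¹) ^ m * (commP (commP a b⁻¹) a) ^ (m * (m - 1) / 2))⁻¹
      ∈ (⊤ : Subgroup G).lowerCentralSeries 3 := by
  set π := QuotientGroup.mk' ((⊤ : Subgroup G).lowerCentralSeries 3)
  have hc : commP a b⁻¹ ∈ (⊤ : Subgroup G).lowerCentralSeries 1 :=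
    commP_mem_lowerCentralSeries_succ (Subgroup.mem_top a) _
  have hd : commP (commP a b⁻¹) a ∈ (⊤ : Subgroup G).lowerCentralSeries 2 :=
    commP_mem_lowerCentralSeries_succ hc a
  rw [← div_eq_mul_inv, ← QuotientGroup.eq_iff_div_mem, ← Nat.choose_two_right]
  have hd_central : ∀ y, Commute (π (commP (commP a b⁻¹) a)) (π y) :=
    commute_mk_of_mem_lowerCentralSeries (n := 2) hd
  have key := inv_pow_mul_mul_pow_mul_inv_eq (a := π a) (b := π b)
    (by simpa only [← map_inv, ← map_commP] using hd_central a)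
    (by simpa only [← map_inv, ← map_commP] using hd_central (commP a b⁻¹)) m
  simp only [← map_inv, ← map_commP, ← map_pow, ← map_mul] at key
  exact key
end

section
/- Let G be a free group on three generators and n ≥ 1, and let n_2 = n/gcd(n,2). Then every element of the form [[x,y],z]^{n_2} with x,y,z generators lies in G^(4),n; in particular [[x,y],z]^{n_2} ∈ G^(4)·G^n. -/
/-- The subgroup generated by `n`-th powers. -/
def powSubgroup (G : Type*) [Group G] (n : ℕ) : Subgroup G :=
  Subgroup.closure {x : G | ∃ g : G, g ^ n = x}

open scoped commutatorElement

section Abstract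
variable {Q : Type*} [Group Q]

variable (hc : ∀ a b c g : Q, Commute ⁅⁅a, b⁆, c⁆ g)
include hc

theorem hom3 (a b z w : Q) : ⁅⁅a,b⁆, z*w⁆ = ⁅⁅a,b⁆,z⁆ * ⁅⁅a,b⁆,w⁆ := by
  have e : ⁅⁅a,b⁆, z*w⁆ = ⁅⁅a,b⁆,z⁆ * (z * ⁅⁅a,b⁆,w⁆ * z⁻¹) := by group
  rw [e, ← (hc a b w z).eq]; group

theorem comm_comm (a b c d : Q) : ⁅⁅a,b⁆, ⁅c,d⁆⁆ = 1 := by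
  have inv3 : ∀ u : Q, ⁅⁅a,b⁆, u⁻¹⁆ = ⁅⁅a,b⁆,u⁆⁻¹ := by
    intro u
    have := hom3 hc a b u u⁻¹
    simp at this
    rw [eq_comm, inv_eq_iff_mul_eq_one, ← this]
  rw [commutatorElement_def c d, hom3 hc, hom3 hc, hom3 hc, inv3, inv3,
    (hc a b c ⁅⁅a,b⁆,d⁆).eq]
  group

theorem conj2 (a b z g : Q) : ⁅⁅a,b⁆, g*z*g⁻¹⁆ = ⁅⁅a,b⁆,z⁆ := by
  have e : g*z*g⁻¹ = z * ⁅z⁻¹, g⁆ := by group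
  rw [e, hom3 hc, comm_comm hc, mul_one]

theorem conjL (a b z g : Q) : ⁅g*⁅a,b⁆*g⁻¹, z⁆ = ⁅⁅a,b⁆,z⁆ := by
  have e : ⁅g*⁅a,b⁆*g⁻¹, z⁆ = g * ⁅⁅a,b⁆, g⁻¹*z*g⁆ * g⁻¹ := by group
  have e2 : g⁻¹*z*g = g⁻¹*z*(g⁻¹)⁻¹ := by group
  rw [e, e2, conj2 hc, ← (hc a b z g).eq]; group

theorem homL (a a' b z : Q) : ⁅⁅a*a',b⁆, z⁆ = ⁅⁅a,b⁆,z⁆ * ⁅⁅a',b⁆,z⁆ := by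
  have e : ⁅a*a',b⁆ = (a * ⁅a',b⁆ * a⁻¹) * ⁅a,b⁆ := by group
  have e2 : ∀ u v : Q, ⁅u*v, z⁆ = u * ⁅v,z⁆ * u⁻¹ * ⁅u,z⁆ := by intro u v; group
  rw [e, e2, conjL hc, ← (hc a b z (a * ⁅a',b⁆ * a⁻¹)).eq]; group

theorem homM (a b b' z : Q) : ⁅⁅a,b*b'⁆, z⁆ = ⁅⁅a,b⁆,z⁆ * ⁅⁅a,b'⁆,z⁆ := by
  have e : ⁅a,b*b'⁆ = ⁅a,b⁆ * (b * ⁅a,b'⁆ * b⁻¹) := by group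
  have e2 : ∀ u v : Q, ⁅u*v, z⁆ = u * ⁅v,z⁆ * u⁻¹ * ⁅u,z⁆ := by intro u v; group
  rw [e, e2, conjL hc, ← (hc a b' z ⁅a,b⁆).eq, ← (hc a b' z ⁅⁅a,b⁆,z⁆).eq]
  group

theorem invM (a b z : Q) : ⁅⁅a,b⁻¹⁆, z⁆ = ⁅⁅a,b⁆,z⁆⁻¹ := by
  have := homM hc a b b⁻¹ z
  simp at this
  rw [eq_comm, inv_eq_iff_mul_eq_one, ← this]

theorem powL (a b z : Q) (k : ℕ) : ⁅⁅a^k,b⁆, z⁆ = ⁅⁅a,b⁆,z⁆^k := by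
  induction k with
  | zero => simp
  | succ k ih => rw [pow_succ, homL hc, ih, pow_succ]

theorem powM (a b z : Q) (k : ℕ) : ⁅⁅a,b^k⁆, z⁆ = ⁅⁅a,b⁆,z⁆^k := by
  induction k with
  | zero => simp
  | succ k ih => rw [pow_succ, homM hc, ih, pow_succ]

theorem antisym (a b z : Q) : ⁅⁅b,a⁆, z⁆ = ⁅⁅a,b⁆,z⁆⁻¹ := by
  rw [← commutatorElement_inv a b]
  have e : ⁅⁅a,b⁆⁻¹, z⁆ = ⁅a,b⁆⁻¹ * ⁅⁅a,b⁆,z⁆⁻¹ * ⁅a,b⁆ := by group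
  rw [e, ← (hc a b z ⁅a,b⁆⁻¹).inv_left.eq]; group

theorem powComm (a b : Q) (k : ℕ) :
    ⁅a, b^k⁆ * ⁅⁅a,b⁆,b⁆ ^ (∑ i ∈ Finset.range k, i) = ⁅a,b⁆^k := by
  induction k with
  | zero => simp
  | succ k ih =>
    have gen : ∀ u v w : Q, ⁅u, v*w⁆ = ⁅u,v⁆ * (v * ⁅u,w⁆ * v⁻¹) := by
      intro u v w; group
    have e1 : ⁅a, b^(k+1)⁆ = ⁅a,b⁆ * (b * ⁅a,b^k⁆ * b⁻¹) := by
      rw [pow_succ' b k, gen]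
    have e2 : b * ⁅a,b^k⁆ * b⁻¹ = ⁅⁅a,b^k⁆,b⁆⁻¹ * ⁅a,b^k⁆ := by group
    have e3 : ⁅⁅a,b^k⁆,b⁆ = ⁅⁅a,b⁆,b⁆^k := powM hc a b b k
    have hT : ∀ g : Q, Commute (⁅⁅a,b⁆,b⁆) g := hc a b b
    have c1 : Commute ((⁅⁅a,b⁆,b⁆^k)⁻¹) ⁅a,b^k⁆ := ((hT ⁅a,b^k⁆).pow_left k).inv_left
    have c2 : Commute ((⁅⁅a,b⁆,b⁆^k)⁻¹) (⁅⁅a,b⁆,b⁆ ^ (∑ i ∈ Finset.range k, i)) :=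
      (Commute.pow_pow (Commute.refl _) k _).inv_left
    have e4 : ⁅a,b^k⁆ * (⁅⁅a,b⁆,b⁆^k)⁻¹ *
        (⁅⁅a,b⁆,b⁆ ^ (∑ i ∈ Finset.range k, i) * ⁅⁅a,b⁆,b⁆^k) =
        ⁅a,b^k⁆ * ⁅⁅a,b⁆,b⁆ ^ (∑ i ∈ Finset.range k, i) := by
      rw [mul_assoc, ← mul_assoc ((⁅⁅a,b⁆,b⁆^k)⁻¹), c2.eq, mul_assoc, inv_mul_cancel,
        mul_one]
    rw [e1, e2, e3, c1.eq, Finset.sum_range_succ, pow_add, mul_assoc ⁅a,b⁆, e4, ih,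
      ← pow_succ']

theorem Tn (n : ℕ) (hexp : ∀ g : Q, g^n = 1) (a b c : Q) : ⁅⁅a,b⁆,c⁆^n = 1 := by
  rw [← powL hc, hexp a]; simp

theorem powN (n : ℕ) (hexp : ∀ g : Q, g^n = 1) (a b : Q) :
    ⁅a,b⁆^n = ⁅⁅a,b⁆,b⁆ ^ (∑ i ∈ Finset.range n, i) := by
  have := powComm hc a b n
  rw [hexp b] at this
  simpa using this.symm

theorem symRel (n : ℕ) (hexp : ∀ g : Q, g^n = 1) (a b c : Q) :
    ⁅⁅a,b⁆,c⁆ ^ (∑ i ∈ Finset.range n, i) * ⁅⁅a,c⁆,b⁆ ^ (∑ i ∈ Finset.range n, i) = 1 := by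
  set S := ∑ i ∈ Finset.range n, i with hS
  have h0 := powN hc n hexp a (b*c)
  have gen : ∀ u v w : Q, ⁅u, v*w⁆ = ⁅u,v⁆ * (v * ⁅u,w⁆ * v⁻¹) := by
    intro u v w; group
  -- LHS computation
  have cuv : Commute ⁅a,b⁆ (b * ⁅a,c⁆ * b⁻¹) := by
    rw [← commutatorElement_eq_one_iff_commute, conj2 hc, comm_comm hc]
  have hconj : (b * ⁅a,c⁆ * b⁻¹)^n = b * ⁅a,c⁆^n * b⁻¹ := conj_pow
  have hl : ⁅a, b*c⁆^n = ⁅⁅a,b⁆,b⁆^S * ⁅⁅a,c⁆,c⁆^S := by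
    rw [gen, cuv.mul_pow, hconj, powN hc n hexp a b, powN hc n hexp a c, ← hS,
      ← ((hc a c c b).pow_left S).eq]
    group
  -- RHS computation
  have hr : ⁅⁅a,b*c⁆,b*c⁆ = ⁅⁅a,b⁆,b⁆ * ⁅⁅a,b⁆,c⁆ * (⁅⁅a,c⁆,b⁆ * ⁅⁅a,c⁆,c⁆) := by
    rw [homM hc, hom3 hc, hom3 hc]
  have hsplit : (⁅⁅a,b⁆,b⁆ * ⁅⁅a,b⁆,c⁆ * (⁅⁅a,c⁆,b⁆ * ⁅⁅a,c⁆,c⁆))^S =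
      ⁅⁅a,b⁆,b⁆^S * ⁅⁅a,b⁆,c⁆^S * (⁅⁅a,c⁆,b⁆^S * ⁅⁅a,c⁆,c⁆^S) := by
    rw [Commute.mul_pow, Commute.mul_pow, Commute.mul_pow]
    · exact hc a c b _
    · exact hc a b b _
    · exact ((hc a b b _).mul_left (hc a b c _))
  have heq : ⁅⁅a,b⁆,b⁆^S * ⁅⁅a,c⁆,c⁆^S =
      ⁅⁅a,b⁆,b⁆^S * (⁅⁅a,b⁆,c⁆^S * ⁅⁅a,c⁆,b⁆^S * ⁅⁅a,c⁆,c⁆^S) := by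
    have := h0
    rw [hl, hr, hsplit] at this
    rw [this]
    simp only [mul_assoc]
  have h2 : ⁅⁅a,c⁆,c⁆^S = ⁅⁅a,b⁆,c⁆^S * ⁅⁅a,c⁆,b⁆^S * ⁅⁅a,c⁆,c⁆^S :=
    mul_left_cancel heq
  have h3 : (1:Q) * ⁅⁅a,c⁆,c⁆^S = ⁅⁅a,b⁆,c⁆^S * ⁅⁅a,c⁆,b⁆^S * ⁅⁅a,c⁆,c⁆^S := by
    rw [one_mul]; exact h2
  exact (mul_right_cancel h3).symm

theorem inv3 (a b z : Q) : ⁅⁅a,b⁆, z⁻¹⁆ = ⁅⁅a,b⁆,z⁆⁻¹ := by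
  have := hom3 hc a b z z⁻¹
  simp at this
  rw [eq_comm, inv_eq_iff_mul_eq_one, ← this]

theorem jacobi (a b c : Q) : ⁅⁅a,b⁆,c⁆ * ⁅⁅b,c⁆,a⁆ * ⁅⁅c,a⁆,b⁆ = 1 := by
  have hw : (b⁻¹ * ⁅⁅b,a⁻¹⁆,c⁻¹⁆ * b) * (c⁻¹ * ⁅⁅c,b⁻¹⁆,a⁻¹⁆ * c) *
      (a⁻¹ * ⁅⁅a,c⁻¹⁆,b⁻¹⁆ * a) = 1 := by
    set_option linter.unusedTactic false in group
  have cancel : ∀ (g X : Q), (∀ h : Q, Commute X h) → g⁻¹ * X * g = X := by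
    intro g X hX
    rw [mul_assoc, (hX g).eq, ← mul_assoc, inv_mul_cancel, one_mul]
  rw [cancel b _ (hc b a⁻¹ c⁻¹), cancel c _ (hc c b⁻¹ a⁻¹), cancel a _ (hc a c⁻¹ b⁻¹)] at hw
  have t1 : ⁅⁅b,a⁻¹⁆,c⁻¹⁆ = ⁅⁅a,b⁆,c⁆⁻¹ := by
    rw [invM hc, inv3 hc, antisym hc]; simp
  have t2 : ⁅⁅c,b⁻¹⁆,a⁻¹⁆ = ⁅⁅b,c⁆,a⁆⁻¹ := by
    rw [invM hc, inv3 hc, antisym hc]; simp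
  have t3 : ⁅⁅a,c⁻¹⁆,b⁻¹⁆ = ⁅⁅c,a⁆,b⁆⁻¹ := by
    rw [invM hc, inv3 hc, antisym hc]; simp
  rw [t1, t2, t3] at hw
  have h' : ⁅⁅c,a⁆,b⁆ * (⁅⁅b,c⁆,a⁆ * ⁅⁅a,b⁆,c⁆) = 1 := by
    have := congrArg (·⁻¹) hw
    simpa [mul_inv_rev, mul_assoc] using this
  rw [(hc a b c ⁅⁅b,c⁆,a⁆).eq, ← (hc c a b (⁅⁅b,c⁆,a⁆ * ⁅⁅a,b⁆,c⁆)).eq]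
  exact h'

theorem key (n : ℕ) (hn : 1 ≤ n) (hexp : ∀ g : Q, g^n = 1) (x y z : Q) :
    ⁅⁅x,y⁆,z⁆ ^ (n / Nat.gcd n 2) = 1 := by
  rcases Nat.even_or_odd n with he | ho
  · -- even case
    obtain ⟨m, hm⟩ := he
    have hg : Nat.gcd n 2 = 2 := Nat.gcd_eq_right ⟨m, by omega⟩
    have hdiv : n / Nat.gcd n 2 = m := by rw [hg]; omega
    rw [hdiv]
    set S := ∑ i ∈ Finset.range n, i with hSdef
    have hS2 : S * 2 = n * (n-1) := Finset.sum_range_id_mul_two n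
    have hSm : S = m * (n-1) := by
      have h2 : S * 2 = (m*(n-1))*2 := by rw [hS2, hm]; ring
      exact Nat.eq_of_mul_eq_mul_right (by norm_num) h2
    have hrel : ∀ a b c : Q, ⁅⁅a,b⁆,c⁆^S = (⁅⁅a,b⁆,c⁆^m)⁻¹ := by
      intro a b c
      apply eq_inv_of_mul_eq_one_left
      rw [← pow_add, hSm]
      have hexpo : m * (n-1) + m = m * n := by
        have : n - 1 + 1 = n := Nat.succ_pred_eq_of_pos hn
        calc m * (n-1) + m = m * ((n-1)+1) := by ring
          _ = m * n := by rw [this]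
      rw [hexpo, mul_comm, pow_mul, Tn hc n hexp, one_pow]
    have hsym : ∀ a b c : Q, ⁅⁅a,c⁆,b⁆^m = (⁅⁅a,b⁆,c⁆^m)⁻¹ := by
      intro a b c
      have h := symRel hc n hexp a b c
      rw [← hSdef, hrel, hrel] at h
      have h2 := mul_eq_one_iff_inv_eq.mp h
      simp only [inv_inv] at h2
      rw [h2, inv_inv]
    have hanti : ∀ a b c : Q, ⁅⁅b,a⁆,c⁆^m = (⁅⁅a,b⁆,c⁆^m)⁻¹ := by
      intro a b c
      rw [antisym hc, inv_pow]
    have h1 : ⁅⁅x,z⁆,y⁆^m = (⁅⁅x,y⁆,z⁆^m)⁻¹ := hsym x y z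
    have h2 : ⁅⁅z,x⁆,y⁆^m = ⁅⁅x,y⁆,z⁆^m := by
      rw [hanti, h1, inv_inv]
    have h3 : ⁅⁅y,x⁆,z⁆^m = (⁅⁅x,y⁆,z⁆^m)⁻¹ := hanti x y z
    have h5 : ⁅⁅y,z⁆,x⁆^m = ⁅⁅x,y⁆,z⁆^m := by
      have h4 := hsym y z x
      rw [h3] at h4
      have := inv_injective h4.symm
      rw [this]
    have hA2 : ⁅⁅x,y⁆,z⁆^m * ⁅⁅x,y⁆,z⁆^m = 1 := by
      rw [← pow_add]
      have : m + m = n := hm.symm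
      rw [this]
      exact Tn hc n hexp x y z
    have hA3 : ⁅⁅x,y⁆,z⁆^m * ⁅⁅x,y⁆,z⁆^m * ⁅⁅x,y⁆,z⁆^m = 1 := by
      have hj := congrArg (· ^ m) (jacobi hc x y z)
      simp only [one_pow] at hj
      rw [Commute.mul_pow ((hc x y z _).mul_left (hc y z x _)),
        Commute.mul_pow (hc x y z _), h5, h2] at hj
      exact hj
    rw [hA2, one_mul] at hA3
    exact hA3
  · -- odd case
    have hg : Nat.gcd n 2 = 1 := Nat.coprime_two_right.mpr ho
    rw [hg, Nat.div_one]
    exact Tn hc n hexp x y z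

end Abstract

theorem powSubgroup_normal (G : Type*) [Group G] (n : ℕ) : (powSubgroup G n).Normal := by
  constructor
  intro x hx g
  have hmap : Subgroup.map ((MulAut.conj g).toMonoidHom) (powSubgroup G n) ≤ powSubgroup G n := by
    rw [powSubgroup, MonoidHom.map_closure]
    apply Subgroup.closure_mono
    rintro _ ⟨y, ⟨h, rfl⟩, rfl⟩
    exact ⟨(MulAut.conj g) h, by rw [← map_pow]; rfl⟩
  have hmem : g * x * g⁻¹ ∈ Subgroup.map ((MulAut.conj g).toMonoidHom) (powSubgroup G n) :=
    ⟨x, hx, by simp [MulAut.conj]⟩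
  exact hmap hmem

theorem mem_lcs (G : Type*) [Group G] (a b c d : G) :
    ⁅⁅⁅a,b⁆,c⁆,d⁆ ∈ (⊤ : Subgroup G).lowerCentralSeries 3 := by
  have h0 : a ∈ (⊤ : Subgroup G).lowerCentralSeries 0 := by
    rw [Subgroup.lowerCentralSeries_zero]; trivial
  have step : ∀ (k : ℕ) (p q : G), p ∈ (⊤ : Subgroup G).lowerCentralSeries k →
      ⁅p, q⁆ ∈ (⊤ : Subgroup G).lowerCentralSeries (k+1) := by
    intro k p q hp
    rw [Subgroup.lowerCentralSeries_succ]
    apply Subgroup.subset_closure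
    exact ⟨p, hp, q, Subgroup.mem_top q, (commutatorElement_def p q).symm⟩
  exact step 2 _ d (step 1 _ c (step 0 _ b h0))

theorem triple_comm_pow_n2_mem (n : ℕ) (hn : 1 ≤ n) (i j k : Fin 3) :
    let G := FreeGroup (Fin 3)
    (commP (commP (FreeGroup.of i) (FreeGroup.of j)) (FreeGroup.of k)) ^ (n / Nat.gcd n 2)
      ∈ Subgroup.lowerCentralSeries (⊤ : Subgroup G) 3 ⊔ powSubgroup G n := by
  intro G
  haveI : (powSubgroup G n).Normal := powSubgroup_normal G n
  set N : Subgroup G := Subgroup.lowerCentralSeries (⊤ : Subgroup G) 3 ⊔ powSubgroup G n with hN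
  haveI : N.Normal := Subgroup.sup_normal _ _
  set x := FreeGroup.of i
  set y := FreeGroup.of j
  set z := FreeGroup.of k
  have hform : commP (commP x y) z = ⁅⁅y⁻¹,x⁻¹⁆, z⁻¹⁆ := by
    simp only [commP, commutatorElement_def]
    group
  rw [hform]
  show ⁅⁅y⁻¹,x⁻¹⁆, z⁻¹⁆ ^ (n / Nat.gcd n 2) ∈ N
  rw [← QuotientGroup.eq_one_iff]
  let π := QuotientGroup.mk' N
  have hπ : ∀ g : G, (g : G ⧸ N) = π g := fun g => rfl
  rw [hπ, map_pow, map_commutatorElement, map_commutatorElement, map_inv, map_inv, map_inv]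
  have hexp : ∀ q : G ⧸ N, q ^ n = 1 := by
    intro q
    obtain ⟨g, rfl⟩ := QuotientGroup.mk'_surjective N q
    rw [← map_pow]
    rw [show π (g^n) = ((g^n : G) : G ⧸ N) from rfl, QuotientGroup.eq_one_iff]
    exact Subgroup.mem_sup_right (Subgroup.subset_closure ⟨g, rfl⟩)
  have hc : ∀ a b c g : G ⧸ N, Commute ⁅⁅a,b⁆,c⁆ g := by
    intro a b c g
    obtain ⟨a, rfl⟩ := QuotientGroup.mk'_surjective N a
    obtain ⟨b, rfl⟩ := QuotientGroup.mk'_surjective N b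
    obtain ⟨c, rfl⟩ := QuotientGroup.mk'_surjective N c
    obtain ⟨g, rfl⟩ := QuotientGroup.mk'_surjective N g
    rw [← commutatorElement_eq_one_iff_commute, ← map_commutatorElement,
      ← map_commutatorElement, ← map_commutatorElement]
    rw [show π ⁅⁅⁅a,b⁆,c⁆,g⁆ = ((⁅⁅⁅a,b⁆,c⁆,g⁆ : G) : G ⧸ N) from rfl,
      QuotientGroup.eq_one_iff]
    exact Subgroup.mem_sup_left (mem_lcs G a b c g)
  exact key hc n hn hexp _ _ _
end
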